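/- Define (k−1)/k·n-delete Nim with n = km heaps (k ≥ 2, m ≥ 1): positions are sorted vectors z₁ ≤ ⋯ ≤ z_{km} of positive integers; a move deletes (k−1)m heaps and splits each of the remaining m heaps into k positive parts. Let k^s be the smallest power of k strictly greater than z_{(k−1)m+1}. With P-positions defined inductively, the position is a P-position if and only if (a) z₁,…,z_{(k−1)m+1} are all k-oddoid, and (b) every k-evenoid z_l satisfies z_l ≥ k^s. -/

import Mathlib

/-!
Write `n = k(k-1)`. Oddoids are the numbers `≡ 1, …, k-1 (mod n)`, a sum of `k` oddoids is
evenoid, and `k ^ s ≡ k (mod n)` for `s ≥ 1`; so the `k - 1` numbers just below a power of `k`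
are oddoid and the `k - 1` numbers from it on are evenoid.

Let `k ^ s` be the least power of `k` reached by fewer than `m` heaps. The positions all of whose
evenoid heaps reach `k ^ s` form the kernel of the game graph. If a move leads from such a
position to another one, with exponent `s'`, then each of the `m` split heaps has a part reaching
`k ^ s'`, which is too many: for an oddoid heap take an evenoid part; for an evenoid heap,
otherwise `s ≤ s'`, and some kept heap below `k ^ s` is oddoid with an evenoid part larger than
itself. From a position with an evenoid heap `w < k ^ s`, keep `w` together with `m - 1` heaps
reaching `k ^ (s - 1)`, split `w` into oddoids below `k ^ (s - 1)` and every other kept heap into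
one large part and `k - 1` parts `< k`: then fewer than `m` parts reach `k ^ (s - 1)` and all
evenoid parts do. Moves decrease the total size, so the kernel is the set of `P`-positions.
-/

inductive NPos {α : Type*} (Move : α → α → Prop) : α → Prop
  | intro {p q : α} : Move p q → (∀ r, Move q r → NPos Move r) → NPos Move p

def PPos {α : Type*} (Move : α → α → Prop) (p : α) : Prop :=
  ∀ q, Move p q → NPos Move q

/-- A positive integer is `k`-oddoid if its remainder modulo `k * (k - 1)`
lies between `1` and `k - 1` (inclusive); otherwise it is `k`-evenoid. -/
def Oddoid (k x : ℕ) : Prop :=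
  1 ≤ x % (k * (k - 1)) ∧ x % (k * (k - 1)) ≤ k - 1

/-- A move of `(k-1)/k·n`-delete Nim with `n = k * m` heaps: delete
`(k - 1) * m` heaps (`d`) and split each of the remaining `m` heaps into `k`
positive parts; `L` records, for each remaining heap, the multiset of its
`k` parts (the original heap being their sum). -/
def KDelMove (k m : ℕ) (p q : Multiset ℕ) : Prop :=
  ∃ (d : Multiset ℕ) (L : Multiset (Multiset ℕ)),
    Multiset.card d = (k - 1) * m ∧ Multiset.card L = m ∧
    (∀ P ∈ L, Multiset.card P = k ∧ ∀ x ∈ P, 0 < x) ∧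
    p = d + L.map Multiset.sum ∧
    q = L.join

theorem exists_fin_sum_eq {A B : ℕ} :
    ∀ {j Q : ℕ}, j * A ≤ Q → Q ≤ j * B → ∃ f : Fin j → ℕ, (∀ i, A ≤ f i ∧ f i ≤ B) ∧ ∑ i, f i = Q
  | 0, Q, _, hB => ⟨Fin.elim0, fun i => i.elim0, by rw [zero_mul, Nat.le_zero] at hB; simp [hB]⟩
  | j + 1, Q, hA, hB => by
    have hAB : A ≤ B := by
      by_contra! h
      have := Nat.mul_lt_mul_of_pos_left h (by omega : 0 < j + 1)
      omega
    have hjAB : j * A ≤ j * B := Nat.mul_le_mul_left j hAB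
    rw [Nat.succ_mul] at hA hB
    -- greedy first entry: as large as allowed while the rest can still reach `j * A`
    obtain ⟨g, hg, hgsum⟩ := exists_fin_sum_eq (A := A) (B := B) (j := j)
      (Q := Q - min B (Q - j * A)) (by omega) (by omega)
    refine ⟨Fin.cons (min B (Q - j * A)) g, fun i => ?_, ?_⟩
    · cases i using Fin.cases with
      | zero => simp only [Fin.cons_zero]; omega
      | succ i => simpa only [Fin.cons_succ] using hg i
    · rw [Fin.sum_univ_succ, Fin.cons_zero]
      simp only [Fin.cons_succ, hgsum]
      omega

section Oddoid

variable {k : ℕ}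

theorem oddoid_congr {x y : ℕ} (h : x ≡ y [MOD k * (k - 1)]) : Oddoid k x ↔ Oddoid k y := by
  rw [Oddoid, Oddoid, h]

theorem oddoid_add_mul_iff (x c : ℕ) : Oddoid k (x + k * (k - 1) * c) ↔ Oddoid k x :=
  oddoid_congr (Nat.add_mul_mod_self_left x _ c)

theorem oddoid_of_le_of_le (hk : 2 ≤ k) {x : ℕ} (h1 : 1 ≤ x) (h2 : x ≤ k - 1) : Oddoid k x := by
  have : x < k * (k - 1) := by nlinarith [Nat.sub_add_cancel (by omega : 1 ≤ k)]
  rw [Oddoid, Nat.mod_eq_of_lt this]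
  exact ⟨h1, h2⟩

theorem not_oddoid_of_le_of_le {x : ℕ} (h1 : k ≤ x) (h2 : x ≤ k * (k - 1)) : ¬ Oddoid k x := by
  rintro ⟨h, h'⟩
  rcases h2.lt_or_eq with h2 | rfl
  · rw [Nat.mod_eq_of_lt h2] at h h'
    omega
  · rw [Nat.mod_self] at h
    omega

theorem le_of_not_oddoid (hk : 2 ≤ k) {x : ℕ} (hx : 0 < x) (h : ¬ Oddoid k x) : k ≤ x := by
  by_contra! h'
  exact h (oddoid_of_le_of_le hk hx (by omega))

theorem not_oddoid_sum {P : Multiset ℕ} (hP : Multiset.card P = k) (h : ∀ x ∈ P, Oddoid k x) :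
    ¬ Oddoid k P.sum := by
  set R := (P.map (· % (k * (k - 1)))).sum
  have hR : ∀ x ∈ P.map (· % (k * (k - 1))), 1 ≤ x ∧ x ≤ k - 1 := by
    simp only [Multiset.mem_map]
    rintro _ ⟨x, hx, rfl⟩
    exact h x hx
  have hlo : k ≤ R := by
    simpa [hP] using Multiset.card_nsmul_le_sum (fun x hx => (hR x hx).1)
  have hhi : R ≤ k * (k - 1) := by
    simpa [hP] using Multiset.sum_le_card_nsmul _ _ (fun x hx => (hR x hx).2)
  rw [oddoid_congr (Multiset.sum_nat_mod P _)]
  exact not_oddoid_of_le_of_le hlo hhi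

theorem exists_pow_eq_add_mul {s : ℕ} (hs : s ≠ 0) : ∃ B, k ^ s = k + k * (k - 1) * B := by
  obtain ⟨B, hB⟩ := Nat.sub_one_dvd_pow_sub_one k (s - 1)
  refine ⟨B, ?_⟩
  rcases Nat.eq_zero_or_pos k with rfl | hk
  · simp [hs]
  have h1 : 1 ≤ k ^ (s - 1) := Nat.one_le_pow _ _ hk
  rw [← Nat.sub_add_cancel (Nat.one_le_iff_ne_zero.2 hs), pow_succ', mul_assoc, ← hB,
    Nat.mul_sub, mul_one, Nat.add_sub_cancel' (Nat.le_mul_of_pos_right k h1)]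

theorem add_le_pow_of_not_oddoid (hk : 2 ≤ k) {x s : ℕ} (hs : s ≠ 0) (h : ¬ Oddoid k x)
    (hx : x < k ^ s) : x + k ≤ k ^ s := by
  obtain ⟨B, hB⟩ := exists_pow_eq_add_mul (k := k) hs
  by_contra! hlt
  have hx' : x = (x - k * (k - 1) * B) + k * (k - 1) * B := by omega
  rw [hx', oddoid_add_mul_iff] at h
  exact h (oddoid_of_le_of_le hk (by omega) (by omega))

theorem pow_add_le_of_oddoid (hk : 2 ≤ k) {y s : ℕ} (hs : s ≠ 0) (h : Oddoid k y)
    (hy : k ^ s ≤ y) : k ^ s + (k - 1) ≤ y := by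
  obtain ⟨B, hB⟩ := exists_pow_eq_add_mul (k := k) hs
  by_contra! hlt
  have hy' : y = (y - k * (k - 1) * B) + k * (k - 1) * B := by omega
  rw [hy', oddoid_add_mul_iff] at h
  have : 2 * (k - 1) ≤ k * (k - 1) := Nat.mul_le_mul_right _ hk
  exact not_oddoid_of_le_of_le (by omega) (by omega) h

theorem exists_residues_of_not_oddoid (hk : 2 ≤ k) {W : ℕ} (h : ¬ Oddoid k W) (hW : k ≤ W) :
    ∃ (u : ℕ) (r : Fin k → ℕ), (∀ i, 1 ≤ r i ∧ r i ≤ k - 1) ∧ W = k * (k - 1) * u + ∑ i, r i := by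
  have hn : k ≤ k * (k - 1) := Nat.le_mul_of_pos_right k (by omega)
  have hdiv := Nat.div_add_mod W (k * (k - 1))
  have hmod := Nat.mod_lt W (by omega : 0 < k * (k - 1))
  -- the remainder of an evenoid is `0` or at least `k`; in the first case borrow one block
  obtain ⟨u, T, hkT, hTn, rfl⟩ : ∃ u T, k ≤ T ∧ T ≤ k * (k - 1) ∧ W = k * (k - 1) * u + T := by
    by_cases h0 : W % (k * (k - 1)) = 0
    · obtain ⟨q, hq⟩ : ∃ q, W / (k * (k - 1)) = q + 1 :=
        Nat.exists_eq_succ_of_ne_zero fun h' => by rw [h', h0] at hdiv; omega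
      refine ⟨q, k * (k - 1), hn, le_rfl, ?_⟩
      rw [hq, h0, mul_add, mul_one] at hdiv
      omega
    · exact ⟨W / (k * (k - 1)), W % (k * (k - 1)), by by_contra! h'; exact h ⟨by omega, by omega⟩,
        hmod.le, hdiv.symm⟩
  obtain ⟨r, hr, hrsum⟩ := exists_fin_sum_eq (j := k) (A := 1) (B := k - 1) (by omega) hTn
  exact ⟨u, r, hr, by rw [hrsum]⟩

end Oddoid

section Splits

variable {k : ℕ}

theorem exists_split_lt_pow (hk : 2 ≤ k) {W σ : ℕ} (h : ¬ Oddoid k W) (hkW : k ≤ W)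
    (hW : W + k ≤ k ^ (σ + 1)) :
    ∃ P : Multiset ℕ, Multiset.card P = k ∧ (∀ x ∈ P, 0 < x ∧ Oddoid k x ∧ x < k ^ σ) ∧
      P.sum = W := by
  have hσ : σ ≠ 0 := by
    rintro rfl
    rw [zero_add, pow_one] at hW
    omega
  obtain ⟨u, r, hr, rfl⟩ := exists_residues_of_not_oddoid hk h hkW
  obtain ⟨B, hB⟩ := exists_pow_eq_add_mul (k := k) hσ
  have hrsum : k ≤ ∑ i, r i := by
    simpa using Finset.card_nsmul_le_sum Finset.univ r 1 fun i _ => (hr i).1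
  have hu : u ≤ k * B := by
    by_contra! hlt
    have h1 : k * (k - 1) * (k * B + 1) ≤ k * (k - 1) * u := Nat.mul_le_mul_left _ hlt
    have h2 : k ^ (σ + 1) = k + k * (k - 1) * (k * B + 1) := by
      rw [pow_succ', hB]
      cases k with
      | zero => omega
      | succ k => simp only [Nat.add_sub_cancel]; ring
    omega
  obtain ⟨c, hc, hcsum⟩ := exists_fin_sum_eq (j := k) (A := 0) (B := B) (by simp) hu
  refine ⟨Finset.univ.val.map fun i => r i + k * (k - 1) * c i, by simp, ?_, ?_⟩
  · simp only [Multiset.mem_map, Finset.mem_val, Finset.mem_univ, true_and]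
    rintro _ ⟨i, rfl⟩
    have hci : k * (k - 1) * c i ≤ k * (k - 1) * B := Nat.mul_le_mul_left _ (hc i).2
    have hri := hr i
    refine ⟨by omega, ?_, by omega⟩
    rw [oddoid_add_mul_iff]
    exact oddoid_of_le_of_le hk hri.1 hri.2
  · rw [Finset.sum_map_val, Finset.sum_add_distrib, ← Finset.mul_sum, hcsum, add_comm]

theorem exists_split_one_ge_pow (hk : 2 ≤ k) {c y : ℕ} (hc : c ≠ 0) (hy : k ^ c ≤ y) :
    ∃ P : Multiset ℕ, Multiset.card P = k ∧ (∀ x ∈ P, 0 < x ∧ (¬ Oddoid k x → k ^ c ≤ x)) ∧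
      P.sum = y ∧ P.countP (k ^ c ≤ ·) ≤ 1 := by
  have hkc : k ≤ k ^ c := Nat.le_self_pow hc k
  suffices ∃ (b : ℕ) (R : Multiset ℕ), Multiset.card R = k - 1 ∧ (∀ x ∈ R, 1 ≤ x ∧ x ≤ k - 1) ∧
      0 < b ∧ (Oddoid k b ∨ k ^ c ≤ b) ∧ b + R.sum = y by
    obtain ⟨b, R, hRcard, hR, hb, hbc, hsum⟩ := this
    refine ⟨b ::ₘ R, by rw [Multiset.card_cons]; omega, ?_, by rwa [Multiset.sum_cons], ?_⟩
    · intro x hx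
      rcases Multiset.mem_cons.1 hx with rfl | hx
      · exact ⟨hb, hbc.resolve_left⟩
      · exact ⟨(hR x hx).1, fun h => (h (oddoid_of_le_of_le hk (hR x hx).1 (hR x hx).2)).elim⟩
    · have : R.countP (k ^ c ≤ ·) = 0 :=
        Multiset.countP_eq_zero.2 fun x hx => by have := (hR x hx).2; omega
      rw [Multiset.countP_cons, this]
      split_ifs <;> simp
  by_cases ho : Oddoid k y
  · have := pow_add_le_of_oddoid hk hc ho hy
    refine ⟨y - (k - 1), Multiset.replicate (k - 1) 1, Multiset.card_replicate _ _, ?_,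
      by omega, Or.inr (by omega), ?_⟩
    · intro x hx
      rw [Multiset.eq_of_mem_replicate hx]
      omega
    · rw [Multiset.sum_replicate, smul_eq_mul, mul_one]
      omega
  · obtain ⟨u, r, hr, rfl⟩ := exists_residues_of_not_oddoid hk ho (hkc.trans hy)
    let i₀ : Fin k := ⟨0, by omega⟩
    obtain ⟨R, hR⟩ := Multiset.exists_cons_of_mem
      (Multiset.mem_map_of_mem r (Finset.mem_univ_val i₀))
    have hRmem : ∀ x ∈ R, 1 ≤ x ∧ x ≤ k - 1 := fun x hx => by
      obtain ⟨i, -, rfl⟩ := Multiset.mem_map.1 (hR ▸ Multiset.mem_cons_of_mem hx)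
      exact hr i
    have hcard := congrArg Multiset.card hR
    have hsum := congrArg Multiset.sum hR
    simp only [Multiset.card_map, Finset.card_val, Finset.card_univ, Fintype.card_fin,
      Multiset.card_cons, Finset.sum_map_val, Multiset.sum_cons] at hcard hsum
    have hr₀ := hr i₀
    refine ⟨r i₀ + k * (k - 1) * u, R, by omega, hRmem, by omega, Or.inl ?_, by rw [hsum]; ring⟩
    rw [oddoid_add_mul_iff]
    exact oddoid_of_le_of_le hk hr₀.1 hr₀.2

end Splits

section Kernel

variable {α : Type*} {Move : α → α → Prop}

theorem NPos.not_pPos {p : α} (h : NPos Move p) : ¬ PPos Move p := by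
  induction h with
  | intro hpq _ ih =>
    intro hp
    cases hp _ hpq with
    | intro hqr hr => exact ih _ hqr hr

theorem pPos_iff_of_kernel (S G : α → Prop) (f : α → ℕ)
    (hS : ∀ p q, S p → Move p q → S q ∧ f q < f p)
    (hstable : ∀ p q, S p → G p → Move p q → ¬ G q)
    (habsorb : ∀ p, S p → ¬ G p → ∃ q, Move p q ∧ G q) {p : α} (hp : S p) :
    PPos Move p ↔ G p := by
  have key : ∀ n p, f p = n → S p → (G p → PPos Move p) ∧ (¬ G p → NPos Move p) := by
    intro n
    induction n using Nat.strong_induction_on with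
    | _ n ih =>
      rintro p rfl hp
      refine ⟨fun hG q hpq => ?_, fun hG => ?_⟩
      · obtain ⟨hq, hlt⟩ := hS p q hp hpq
        exact (ih _ hlt q rfl hq).2 (hstable p q hp hG hpq)
      · obtain ⟨q, hpq, hGq⟩ := habsorb p hp hG
        obtain ⟨hq, hlt⟩ := hS p q hp hpq
        exact NPos.intro hpq ((ih _ hlt q rfl hq).1 hGq)
  obtain ⟨hP, hN⟩ := key _ p rfl hp
  exact ⟨fun h => by_contra fun hG => (hN hG).not_pPos h, hP⟩

end Kernel

theorem Multiset.countP_join {α : Type*} (r : α → Prop) [DecidablePred r]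
    (L : Multiset (Multiset α)) : L.join.countP r = (L.map (Multiset.countP r)).sum := by
  induction L using Multiset.induction_on with
  | empty => simp
  | cons P L ih => rw [Multiset.join_cons, Multiset.countP_add, ih, Multiset.map_cons,
      Multiset.sum_cons]

theorem Multiset.exists_map_eq_of_forall_mem {α β : Type*} {Q : β → Prop} {f : β → α}
    (X : Multiset α) (h : ∀ y ∈ X, ∃ b, Q b ∧ f b = y) :
    ∃ L : Multiset β, L.map f = X ∧ ∀ b ∈ L, Q b := by
  induction X using Multiset.induction_on with
  | empty => exact ⟨0, rfl, by simp⟩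
  | cons y X ih =>
    obtain ⟨b, hb, rfl⟩ := h y (Multiset.mem_cons_self _ _)
    obtain ⟨L, rfl, hL⟩ := ih fun y hy => h y (Multiset.mem_cons_of_mem hy)
    exact ⟨b ::ₘ L, by rw [Multiset.map_cons], by simpa using ⟨hb, hL⟩⟩

theorem Multiset.exists_lt_of_countP_le_lt_card {α : Type*} [LinearOrder α] {X : Multiset α}
    {v : α} (h : X.countP (v ≤ ·) < Multiset.card X) : ∃ x ∈ X, x < v := by
  by_contra! hall
  exact h.ne (Multiset.countP_eq_card.2 hall)

theorem Multiset.exists_le_card_eq {α : Type*} {S : Multiset α} {n : ℕ}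
    (h : n ≤ Multiset.card S) : ∃ X ≤ S, Multiset.card X = n := by
  have : 0 < Multiset.card (S.powersetCard n) := by
    rw [Multiset.card_powersetCard]
    exact Nat.choose_pos h
  obtain ⟨X, hX⟩ := Multiset.card_pos_iff_exists_mem.1 this
  exact ⟨X, Multiset.mem_powersetCard.1 hX⟩

theorem sum_lt_pow_succ {k t : ℕ} (hk : 0 < k) {P : Multiset ℕ} (hP : Multiset.card P = k)
    (h : ∀ y ∈ P, y < k ^ t) : P.sum < k ^ (t + 1) := by
  have := Multiset.sum_le_card_nsmul P (k ^ t - 1) fun y hy => by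
    have := h y hy
    omega
  rw [hP, smul_eq_mul, Nat.mul_sub, mul_one, ← pow_succ'] at this
  have : k ≤ k ^ (t + 1) := Nat.le_self_pow (by omega) k
  omega

theorem Monotone.lt_iff_card_filter_lt {n : ℕ} {z : Fin n → ℕ} (hz : Monotone z) (i : Fin n)
    (v : ℕ) : z i < v ↔ (Finset.univ.filter fun j => v ≤ z j).card < n - i := by
  constructor
  · intro h
    have hsub : Finset.univ.filter (fun j => v ≤ z j) ⊆ Finset.Ioi i := fun j hj => by
      simp only [Finset.mem_filter, Finset.mem_univ, true_and, Finset.mem_Ioi] at hj ⊢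
      by_contra! hji
      exact absurd (hz hji) (by omega)
    have := Finset.card_le_card hsub
    rw [Fin.card_Ioi] at this
    omega
  · intro h
    by_contra! hv
    have hsub : Finset.Ici i ⊆ Finset.univ.filter (fun j => v ≤ z j) := fun j hj => by
      simp only [Finset.mem_filter, Finset.mem_univ, true_and, Finset.mem_Ici] at hj ⊢
      exact hv.trans (hz hj)
    have := Finset.card_le_card hsub
    rw [Fin.card_Ici] at this
    omega

namespace KDelMove

variable {k m : ℕ}

/-- `k ^ threshold k m p` is the paper's `k ^ s`: the least power of `k` reached by fewer than
`m` heaps, i.e. exceeding the `((k-1)m+1)`-st smallest heap of a position of `k * m` heaps. -/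
noncomputable def threshold (k m : ℕ) (p : Multiset ℕ) : ℕ := sInf {t | p.countP (k ^ t ≤ ·) < m}

def EvenoidsLarge (k m : ℕ) (p : Multiset ℕ) : Prop :=
  ∀ x ∈ p, ¬ Oddoid k x → k ^ threshold k m p ≤ x

theorem countP_lt_iff_threshold_le (hk : 2 ≤ k) (hm : 1 ≤ m) (p : Multiset ℕ) (t : ℕ) :
    p.countP (k ^ t ≤ ·) < m ↔ threshold k m p ≤ t := by
  have hne : p.countP (k ^ p.sum ≤ ·) < m := by
    rw [Multiset.countP_eq_zero.2 fun x hx => not_le.2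
      ((Multiset.le_sum_of_mem hx).trans_lt (Nat.lt_pow_self hk))]
    exact hm
  refine ⟨fun h => Nat.sInf_le h, fun h => lt_of_le_of_lt ?_
    (Nat.sInf_mem (s := {t | p.countP (k ^ t ≤ ·) < m}) ⟨_, hne⟩)⟩
  rw [Multiset.countP_eq_card_filter, Multiset.countP_eq_card_filter]
  exact Multiset.card_le_card (Multiset.monotone_filter_right _
    fun x hx => (Nat.pow_le_pow_right (by omega) h).trans hx)

theorem evenoidsLarge_of_countP_lt (hk : 2 ≤ k) (hm : 1 ≤ m) {p : Multiset ℕ} {c : ℕ}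
    (hc : p.countP (k ^ c ≤ ·) < m) (h : ∀ x ∈ p, ¬ Oddoid k x → k ^ c ≤ x) :
    EvenoidsLarge k m p := fun x hx he =>
  (Nat.pow_le_pow_right (by omega) ((countP_lt_iff_threshold_le hk hm p c).1 hc)).trans (h x hx he)

theorem card_eq {p q : Multiset ℕ} (h : KDelMove k m p q) : Multiset.card q = k * m := by
  obtain ⟨-, L, -, hL, hparts, -, rfl⟩ := h
  rw [Multiset.card_join, Multiset.map_congr rfl fun P hP => (hparts P hP).1, Multiset.map_const',
    Multiset.sum_replicate, hL, smul_eq_mul, mul_comm]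

theorem pos {p q : Multiset ℕ} (h : KDelMove k m p q) : ∀ x ∈ q, 0 < x := by
  obtain ⟨-, L, -, -, hparts, -, rfl⟩ := h
  intro x hx
  obtain ⟨P, hP, hxP⟩ := Multiset.mem_join.1 hx
  exact (hparts P hP).2 x hxP

theorem sum_lt (hk : 2 ≤ k) (hm : 1 ≤ m) {p q : Multiset ℕ} (hpos : ∀ x ∈ p, 0 < x)
    (h : KDelMove k m p q) : q.sum < p.sum := by
  obtain ⟨d, L, hd, -, -, rfl, rfl⟩ := h
  obtain ⟨x, hx⟩ := Multiset.card_pos_iff_exists_mem.1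
    (hd ▸ Nat.mul_pos (by omega) hm : 0 < Multiset.card d)
  have := hpos x (Multiset.mem_add.2 (Or.inl hx))
  have := Multiset.le_sum_of_mem hx
  rw [Multiset.sum_join, Multiset.sum_add]
  omega

theorem of_le {p K : Multiset ℕ} {L : Multiset (Multiset ℕ)} (hcard : Multiset.card p = k * m)
    (hK : K ≤ p) (hKcard : Multiset.card K = m) (hL : L.map Multiset.sum = K)
    (hparts : ∀ P ∈ L, Multiset.card P = k ∧ ∀ x ∈ P, 0 < x) : KDelMove k m p L.join := by
  refine ⟨p - K, L, ?_, by rw [← hKcard, ← hL, Multiset.card_map], hparts,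
    by rw [hL, tsub_add_cancel_of_le hK], rfl⟩
  rw [Multiset.card_sub hK, hcard, hKcard, Nat.sub_one_mul]

theorem not_evenoidsLarge (hk : 2 ≤ k) (hm : 1 ≤ m) {p q : Multiset ℕ}
    (hp : EvenoidsLarge k m p) (h : KDelMove k m p q) : ¬ EvenoidsLarge k m q := by
  obtain ⟨d, L, -, hL, hparts, rfl, rfl⟩ := h
  intro hq
  set s := threshold k m (d + L.map Multiset.sum)
  set s' := threshold k m L.join
  have hkept : ∀ P ∈ L, P.sum ∈ d + L.map Multiset.sum := fun P hP =>
    Multiset.mem_add.2 (Or.inr (Multiset.mem_map_of_mem _ hP))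
  have hpart : ∀ P ∈ L, Oddoid k P.sum → ∃ y ∈ P, k ^ s' ≤ y := by
    intro P hP ho
    obtain ⟨y, hy, hye⟩ : ∃ y ∈ P, ¬ Oddoid k y := by
      by_contra! h
      exact not_oddoid_sum (hparts P hP).1 h ho
    exact ⟨y, hy, hq y (Multiset.mem_join.2 ⟨P, hP, hy⟩) hye⟩
  have hlarge : ∀ P ∈ L, ∃ y ∈ P, k ^ s' ≤ y := by
    intro P hP
    by_cases ho : Oddoid k P.sum
    · exact hpart P hP ho
    -- otherwise `s ≤ s'`, and a kept heap below `k ^ s` (fewer than `m` heaps reach `k ^ s`)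
    -- is oddoid, so it has an evenoid part `≥ k ^ s' ≥ k ^ s`, larger than the heap itself
    by_contra! hsmall
    have hss' : s ≤ s' := Nat.lt_succ_iff.1 <| (Nat.pow_lt_pow_iff_right (by omega)).1 <|
      (hp _ (hkept P hP) ho).trans_lt (sum_lt_pow_succ (by omega) (hparts P hP).1 hsmall)
    obtain ⟨_, hP₀L, hP₀s⟩ := Multiset.exists_lt_of_countP_le_lt_card (v := k ^ s) <| by
      rw [Multiset.card_map, hL]
      exact (Multiset.countP_le_of_le _ (Multiset.le_add_left _ _)).trans_lt
        ((countP_lt_iff_threshold_le hk hm _ s).2 le_rfl)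
    obtain ⟨P₀, hP₀, rfl⟩ := Multiset.mem_map.1 hP₀L
    have hP₀o : Oddoid k P₀.sum := by_contra fun he => (hp _ (hkept P₀ hP₀) he).not_gt hP₀s
    obtain ⟨y₀, hy₀, hy₀s⟩ := hpart P₀ hP₀ hP₀o
    have := Multiset.le_sum_of_mem hy₀
    have := Nat.pow_le_pow_right (by omega : 0 < k) hss'
    omega
  have hcount : m ≤ L.join.countP (k ^ s' ≤ ·) := by
    rw [Multiset.countP_join, ← hL]
    simpa using Multiset.card_nsmul_le_sum (s := L.map (Multiset.countP (k ^ s' ≤ ·))) (a := 1)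
      (by simpa [Nat.one_le_iff_ne_zero, ← Nat.pos_iff_ne_zero, Multiset.countP_pos] using hlarge)
  exact not_lt.2 hcount ((countP_lt_iff_threshold_le hk hm _ s').2 le_rfl)

theorem exists_of_not_oddoid_mem (hk : 2 ≤ k) (hm : 1 ≤ m) {p : Multiset ℕ} {w c : ℕ}
    (hcard : Multiset.card p = k * m) (hw : w ∈ p) (he : ¬ Oddoid k w) (hkw : k ≤ w)
    (hwc : w + k ≤ k ^ (c + 1)) (hc : c ≠ 0) (hbig : m - 1 ≤ (p.erase w).countP (k ^ c ≤ ·)) :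
    ∃ q, KDelMove k m p q ∧ q.countP (k ^ c ≤ ·) < m ∧ ∀ x ∈ q, ¬ Oddoid k x → k ^ c ≤ x := by
  obtain ⟨X, hXle, hXcard⟩ := Multiset.exists_le_card_eq
    (S := (p.erase w).filter (k ^ c ≤ ·)) (n := m - 1) (by rwa [← Multiset.countP_eq_card_filter])
  have hXmem : ∀ y ∈ X, k ^ c ≤ y := fun y hy =>
    (Multiset.mem_filter.1 (Multiset.mem_of_le hXle hy)).2
  -- `w` is split into parts below `k ^ c`, every other kept heap into
  -- parts of which at most one reaches `k ^ c`
  obtain ⟨PW, hPWcard, hPW, hPWsum⟩ := exists_split_lt_pow hk he hkw hwc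
  obtain ⟨LX, hLX, hLXparts⟩ := Multiset.exists_map_eq_of_forall_mem (f := Multiset.sum)
    (Q := fun P => Multiset.card P = k ∧ (∀ x ∈ P, 0 < x ∧ (¬ Oddoid k x → k ^ c ≤ x)) ∧
      P.countP (k ^ c ≤ ·) ≤ 1) X fun y hy => by
    obtain ⟨P, h1, h2, h3, h4⟩ := exists_split_one_ge_pow hk hc (hXmem y hy)
    exact ⟨P, ⟨h1, h2, h4⟩, h3⟩
  have hK : w ::ₘ X ≤ p := by
    rw [← Multiset.cons_erase hw]
    exact Multiset.cons_le_cons _ (hXle.trans (Multiset.filter_le _ _))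
  have hLXcard : Multiset.card LX = m - 1 := by rw [← hXcard, ← hLX, Multiset.card_map]
  refine ⟨(PW ::ₘ LX).join, of_le hcard hK (by rw [Multiset.card_cons, hXcard]; omega)
    (by rw [Multiset.map_cons, hPWsum, hLX]) ?_, ?_, ?_⟩
  · intro P hP
    rcases Multiset.mem_cons.1 hP with rfl | hP
    · exact ⟨hPWcard, fun x hx => (hPW x hx).1⟩
    · exact ⟨(hLXparts P hP).1, fun x hx => ((hLXparts P hP).2.1 x hx).1⟩
  · rw [Multiset.join_cons, Multiset.countP_add,
      Multiset.countP_eq_zero.2 fun x hx => not_le.2 (hPW x hx).2.2, Multiset.countP_join]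
    have := Multiset.sum_le_card_nsmul (LX.map (Multiset.countP (k ^ c ≤ ·))) 1
      (by simpa using fun P hP => (hLXparts P hP).2.2)
    rw [Multiset.card_map, hLXcard, smul_eq_mul, mul_one] at this
    omega
  · intro x hx he
    obtain ⟨P, hP, hxP⟩ := Multiset.mem_join.1 hx
    rcases Multiset.mem_cons.1 hP with rfl | hP
    · exact absurd (hPW x hxP).2.1 he
    · exact ((hLXparts P hP).2.1 x hxP).2 he

theorem exists_evenoidsLarge (hk : 2 ≤ k) (hm : 1 ≤ m) {p : Multiset ℕ}
    (hcard : Multiset.card p = k * m) (hpos : ∀ x ∈ p, 0 < x) (h : ¬ EvenoidsLarge k m p) :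
    ∃ q, KDelMove k m p q ∧ EvenoidsLarge k m q := by
  simp only [EvenoidsLarge, not_forall, not_le, exists_prop] at h
  obtain ⟨w, hw, he, hws⟩ := h
  have hkw := le_of_not_oddoid hk (hpos w hw) he
  obtain ⟨c, hc⟩ : ∃ c, threshold k m p = c + 1 := Nat.exists_eq_succ_of_ne_zero fun h0 => by
    rw [h0, pow_zero] at hws
    omega
  rw [hc] at hws
  have hc0 : c ≠ 0 := by
    rintro rfl
    rw [zero_add, pow_one] at hws
    omega
  have hbig : m - 1 ≤ (p.erase w).countP (k ^ c ≤ ·) := by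
    have := (countP_lt_iff_threshold_le hk hm p c).not.2 (by omega)
    rw [← Multiset.cons_erase hw, Multiset.countP_cons] at this
    split_ifs at this <;> omega
  obtain ⟨q, hpq, hfew, hq⟩ := exists_of_not_oddoid_mem hk hm hcard hw he hkw
    (add_le_pow_of_not_oddoid hk (by omega) he hws) hc0 hbig
  exact ⟨q, hpq, evenoidsLarge_of_countP_lt hk hm hfew hq⟩

theorem pPos_iff_evenoidsLarge (hk : 2 ≤ k) (hm : 1 ≤ m) {p : Multiset ℕ}
    (hcard : Multiset.card p = k * m) (hpos : ∀ x ∈ p, 0 < x) :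
    PPos (KDelMove k m) p ↔ EvenoidsLarge k m p :=
  pPos_iff_of_kernel (fun p => Multiset.card p = k * m ∧ ∀ x ∈ p, 0 < x) (EvenoidsLarge k m)
    Multiset.sum (fun _ _ hp h => ⟨⟨h.card_eq, h.pos⟩, h.sum_lt hk hm hp.2⟩)
    (fun _ _ _ hp h => not_evenoidsLarge hk hm hp h)
    (fun _ hp h => exists_evenoidsLarge hk hm hp.1 hp.2 h) ⟨hcard, hpos⟩

end KDelMove

/-- `(k-1)/k·n`-delete Nim: the sorted position `z₁ ≤ … ≤ z_{km}` (zero-indexed,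
so `z_{(k-1)m+1}` is `z ⟨(k-1)*m, _⟩`) is a `P`-position iff
(a) `z₁, …, z_{(k-1)m+1}` are all `k`-oddoid, and (b) every `k`-evenoid `z_l`
satisfies `k^s ≤ z_l`, where `k^s` is the smallest power of `k` strictly
greater than `z_{(k-1)m+1}`. -/
theorem stmt16 (k m : ℕ) (hk : 2 ≤ k) (hm : 1 ≤ m) (z : Fin (k * m) → ℕ)
    (hpos : ∀ i, 0 < z i) (hmono : Monotone z)
    (hidx : (k - 1) * m < k * m) (s : ℕ)
    (hs : z ⟨(k - 1) * m, hidx⟩ < k ^ s)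
    (hsmin : ∀ t, z ⟨(k - 1) * m, hidx⟩ < k ^ t → s ≤ t) :
    PPos (KDelMove k m) (Finset.univ.val.map z) ↔
      ((∀ i : Fin (k * m), (i : ℕ) ≤ (k - 1) * m → Oddoid k (z i)) ∧
       ∀ i : Fin (k * m), ¬ Oddoid k (z i) → k ^ s ≤ z i) := by
  set p := Finset.univ.val.map z
  have hmem : ∀ i, z i ∈ p := fun i => Multiset.mem_map_of_mem z (Finset.mem_univ_val i)
  have hcount : ∀ t, p.countP (k ^ t ≤ ·) < m ↔ z ⟨(k - 1) * m, hidx⟩ < k ^ t := fun t => by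
    rw [hmono.lt_iff_card_filter_lt, Multiset.countP_map, ← Nat.sub_mul,
      Nat.sub_sub_self (by omega), one_mul]
    rfl
  have hthr : KDelMove.threshold k m p = s := le_antisymm
    ((KDelMove.countP_lt_iff_threshold_le hk hm p s).1 ((hcount s).2 hs))
    (hsmin _ ((hcount _).1 ((KDelMove.countP_lt_iff_threshold_le hk hm p _).2 le_rfl)))
  rw [KDelMove.pPos_iff_evenoidsLarge hk hm (by simp [p]) (by simpa [p] using hpos),
    KDelMove.EvenoidsLarge, hthr]
  refine ⟨fun h => ⟨fun i hi => by_contra fun he => ?_, fun i he => h _ (hmem i) he⟩, ?_⟩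
  · have := hmono (show i ≤ ⟨(k - 1) * m, hidx⟩ from hi)
    have := h _ (hmem i) he
    omega
  · rintro ⟨-, h⟩ x hx he
    obtain ⟨i, -, rfl⟩ := Multiset.mem_map.1 hx
    exact h i he
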